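/- On the disk B_R(0) ⊂ ℂ, the functions {ẑⁿ, j·ẑⁿ : n ∈ ℕ₀} form an orthogonal family in L₂(B_R(0); 𝔹): for all n, m, ⟨ẑⁿ, j·ẑᵐ⟩ = 0, and ⟨Λẑⁿ, Λẑᵐ⟩ = (2πR^{n+m+2}/(n+m+2))·δ_{n,m} for Λ ∈ {1, j}. In particular ‖Λẑⁿ‖ = sqrt(π/(n+1))·R^{n+1}. -/

import Mathlib

noncomputable section

@[ext] structure Bicomplex : Type where
  sc : ℂ
  vec : ℂ

namespace Bicomplex

instance : Zero Bicomplex := ⟨⟨0, 0⟩⟩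
instance : One Bicomplex := ⟨⟨1, 0⟩⟩
instance : Add Bicomplex := ⟨fun W V => ⟨W.sc + V.sc, W.vec + V.vec⟩⟩
instance : Neg Bicomplex := ⟨fun W => ⟨-W.sc, -W.vec⟩⟩
instance : Mul Bicomplex :=
  ⟨fun W V => ⟨W.sc * V.sc - W.vec * V.vec, W.sc * V.vec + W.vec * V.sc⟩⟩

@[simp] lemma zero_sc : (0 : Bicomplex).sc = 0 := rfl
@[simp] lemma zero_vec : (0 : Bicomplex).vec = 0 := rfl
@[simp] lemma one_sc : (1 : Bicomplex).sc = 1 := rfl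
@[simp] lemma one_vec : (1 : Bicomplex).vec = 0 := rfl
@[simp] lemma add_sc (W V : Bicomplex) : (W + V).sc = W.sc + V.sc := rfl
@[simp] lemma add_vec (W V : Bicomplex) : (W + V).vec = W.vec + V.vec := rfl
@[simp] lemma neg_sc (W : Bicomplex) : (-W).sc = -W.sc := rfl
@[simp] lemma neg_vec (W : Bicomplex) : (-W).vec = -W.vec := rfl
@[simp] lemma mul_sc (W V : Bicomplex) : (W * V).sc = W.sc * V.sc - W.vec * V.vec := rfl
@[simp] lemma mul_vec (W V : Bicomplex) : (W * V).vec = W.sc * V.vec + W.vec * V.sc := rfl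

instance : CommRing Bicomplex where
  add_assoc a b c := by ext <;> simp <;> ring
  zero_add a := by ext <;> simp
  add_zero a := by ext <;> simp
  add_comm a b := by ext <;> simp <;> ring
  mul_assoc a b c := by ext <;> simp <;> ring
  one_mul a := by ext <;> simp
  mul_one a := by ext <;> simp
  left_distrib a b c := by ext <;> simp <;> ring
  right_distrib a b c := by ext <;> simp <;> ring
  mul_comm a b := by ext <;> simp <;> ring
  zero_mul a := by ext <;> simp
  mul_zero a := by ext <;> simp
  neg_add_cancel a := by ext <;> simp
  nsmul := nsmulRec
  zsmul := zsmulRec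

/-- The canonical embedding of `ℂ` into the bicomplex numbers. -/
def oc (z : ℂ) : Bicomplex := ⟨z, 0⟩

/-- The second imaginary unit `j`. -/
def jay : Bicomplex := ⟨0, 1⟩

/-- The bicomplex conjugation `conj (u + jv) = u - jv`. -/
def bconj (W : Bicomplex) : Bicomplex := ⟨W.sc, -W.vec⟩

/-- The idempotent `p⁺ = (1 + ij)/2`. -/
def pp : Bicomplex := ⟨1/2, Complex.I/2⟩

/-- The idempotent `p⁻ = (1 - ij)/2`. -/
def pm : Bicomplex := ⟨1/2, -(Complex.I/2)⟩

/-- The idempotent component `W⁺ = Sc W - i Vec W`. -/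
def plus (W : Bicomplex) : ℂ := W.sc - Complex.I * W.vec

/-- The idempotent component `W⁻ = Sc W + i Vec W`. -/
def minus (W : Bicomplex) : ℂ := W.sc + Complex.I * W.vec

/-- The involution `W† = p⁺ (W⁺)* + p⁻ (W⁻)*`. -/
def dag (W : Bicomplex) : Bicomplex :=
  pp * oc ((starRingEnd ℂ) (plus W)) + pm * oc ((starRingEnd ℂ) (minus W))

/-- The complex inner product `⟨W,V⟩_𝔹 = Sc (W V†)`. -/
def binner (W V : Bicomplex) : ℂ := (W * dag V).sc

/-- The norm `|W|_𝔹 = sqrt (|Sc W|² + |Vec W|²)`. -/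
def bnorm (W : Bicomplex) : ℝ :=
  Real.sqrt (‖W.sc‖ ^ 2 + ‖W.vec‖ ^ 2)

/-- The bicomplex exponential `e^W = p⁺ e^{W⁺} + p⁻ e^{W⁻}`. -/
def bexp (W : Bicomplex) : Bicomplex :=
  pp * oc (Complex.exp (plus W)) + pm * oc (Complex.exp (minus W))

/-- For `z = x + iy ∈ ℂ`, the bicomplex number `ẑ = x + jy`. -/
def hat (z : ℂ) : Bicomplex := ⟨(z.re : ℂ), (z.im : ℂ)⟩

end Bicomplex

/-!
In the idempotent coordinates `W⁺ = Sc W - i Vec W`, `W⁻ = Sc W + i Vec W` the product of `𝔹` is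
componentwise and `⟨W, V⟩_𝔹 = (W⁺ (V⁺)* + W⁻ (V⁻)*) / 2`. Since `ẑ⁺ = z*`, `ẑ⁻ = z`, and `1`, `j`
have unimodular components, every inner product in question is a combination of the moments
`∫_{B_R} zⁿ (z*)ᵐ`, which polar coordinates evaluate to `δₙₘ 2π R^(n+m+2) / (n+m+2)`.
The norms are the case `n = m`, because `|W|_𝔹² = ⟨W, W⟩_𝔹`.
-/

open MeasureTheory Real
open scoped ComplexConjugate Complex

namespace Bicomplex

lemma plus_mul (W V : Bicomplex) : plus (W * V) = plus W * plus V := by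
  simp only [plus, mul_sc, mul_vec]
  linear_combination -(W.vec * V.vec) * Complex.I_sq

lemma minus_mul (W V : Bicomplex) : minus (W * V) = minus W * minus V := by
  simp only [minus, mul_sc, mul_vec]
  linear_combination -(W.vec * V.vec) * Complex.I_sq

@[simp] lemma plus_one : plus 1 = 1 := by simp [plus]
@[simp] lemma minus_one : minus 1 = 1 := by simp [minus]

lemma plus_pow (W : Bicomplex) (n : ℕ) : plus (W ^ n) = plus W ^ n := by
  induction n with
  | zero => simp
  | succ k ih => rw [pow_succ, pow_succ, plus_mul, ih]

lemma minus_pow (W : Bicomplex) (n : ℕ) : minus (W ^ n) = minus W ^ n := by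
  induction n with
  | zero => simp
  | succ k ih => rw [pow_succ, pow_succ, minus_mul, ih]

@[simp] lemma plus_jay : plus jay = -Complex.I := by simp [plus, jay]
@[simp] lemma minus_jay : minus jay = Complex.I := by simp [minus, jay]

@[simp] lemma plus_hat (z : ℂ) : plus (hat z) = conj z := by
  simp [plus, hat, Complex.ext_iff]

@[simp] lemma minus_hat (z : ℂ) : minus (hat z) = z := by
  simp [minus, hat, Complex.ext_iff]

lemma binner_eq (W V : Bicomplex) :
    binner W V = (plus W * conj (plus V) + minus W * conj (minus V)) / 2 := by
  simp only [binner, dag, pp, pm, oc, plus, minus, mul_sc, add_sc, mul_vec, add_vec, map_add,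
    map_sub, map_mul, Complex.conj_I]
  ring

lemma ofReal_bnorm_sq (W : Bicomplex) : ((bnorm W ^ 2 : ℝ) : ℂ) = binner W W := by
  have hnorm : bnorm W ^ 2 = (‖plus W‖ ^ 2 + ‖minus W‖ ^ 2) / 2 := by
    have hpar := parallelogram_law_with_norm ℝ W.sc (Complex.I * W.vec)
    rw [norm_mul, Complex.norm_I, one_mul] at hpar
    rw [bnorm, Real.sq_sqrt (by positivity), plus, minus]
    linear_combination (-1 / 2 : ℝ) * hpar
  rw [binner_eq, Complex.mul_conj', Complex.mul_conj', hnorm]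
  push_cast
  ring

lemma binner_mul_mul {Λ : Bicomplex} (hplus : ‖plus Λ‖ = 1) (hminus : ‖minus Λ‖ = 1)
    (W V : Bicomplex) : binner (Λ * W) (Λ * V) = binner W V := by
  have unit {w : ℂ} (hw : ‖w‖ = 1) : w * conj w = 1 := by simp [Complex.mul_conj', hw]
  rw [binner_eq, binner_eq, plus_mul, plus_mul, minus_mul, minus_mul, map_mul, map_mul]
  linear_combination (plus W * conj (plus V)) * unit hplus / 2
    + (minus W * conj (minus V)) * unit hminus / 2

lemma norm_plus_eq_one_and_norm_minus_eq_one {Λ : Bicomplex} (hΛ : Λ = 1 ∨ Λ = jay) :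
    ‖plus Λ‖ = 1 ∧ ‖minus Λ‖ = 1 := by
  rcases hΛ with rfl | rfl <;> simp

lemma binner_hat_pow (z : ℂ) (n m : ℕ) :
    binner (hat z ^ n) (hat z ^ m) = (z ^ m * conj z ^ n + z ^ n * conj z ^ m) / 2 := by
  simp only [binner_eq, plus_pow, minus_pow, plus_hat, minus_hat, map_pow, Complex.conj_conj]
  ring

lemma binner_hat_pow_jay_mul (z : ℂ) (n m : ℕ) :
    binner (hat z ^ n) (jay * hat z ^ m)
      = Complex.I * (z ^ m * conj z ^ n - z ^ n * conj z ^ m) / 2 := by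
  simp only [binner_eq, plus_mul, minus_mul, plus_pow, minus_pow, plus_hat, minus_hat, plus_jay,
    minus_jay, map_mul, map_pow, map_neg, Complex.conj_conj, Complex.conj_I]
  ring

end Bicomplex

section DiskIntegrals

open Set

lemma setIntegral_ball_zero_eq_integral_polarCoord {E : Type*} [NormedAddCommGroup E]
    [NormedSpace ℝ E] (f : ℂ → E) (R : ℝ) :
    ∫ z in Metric.ball (0 : ℂ) R, f z
      = ∫ p in Ioo 0 R ×ˢ Ioo (-π) π, p.1 • f (Complex.polarCoord.symm p) := by
  have hind : ∀ p ∈ Ioi (0 : ℝ) ×ˢ Ioo (-π) π,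
      p.1 • (Metric.ball 0 R).indicator f (Complex.polarCoord.symm p)
        = (Ioo 0 R ×ˢ univ).indicator (fun p ↦ p.1 • f (Complex.polarCoord.symm p)) p := by
    rintro ⟨r, θ⟩ ⟨hr, -⟩
    have hmem : Complex.polarCoord.symm (r, θ) ∈ Metric.ball 0 R ↔ (r, θ) ∈ Ioo 0 R ×ˢ univ := by
      simp only [mem_Ioi] at hr
      simp [abs_of_pos hr, hr]
    by_cases h : (r, θ) ∈ Ioo 0 R ×ˢ univ
    · rw [indicator_of_mem (hmem.2 h), indicator_of_mem h]
    · rw [indicator_of_notMem (mt hmem.1 h), indicator_of_notMem h, smul_zero]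
  calc ∫ z in Metric.ball (0 : ℂ) R, f z
      = ∫ p in polarCoord.target,
          p.1 • (Metric.ball 0 R).indicator f (Complex.polarCoord.symm p) := by
        rw [← integral_indicator measurableSet_ball, Complex.integral_comp_polarCoord_symm]
    _ = ∫ p in Ioi 0 ×ˢ Ioo (-π) π,
          (Ioo 0 R ×ˢ univ).indicator (fun p ↦ p.1 • f (Complex.polarCoord.symm p)) p :=
        setIntegral_congr_fun (measurableSet_Ioi.prod measurableSet_Ioo) hind
    _ = _ := by
        rw [setIntegral_indicator (measurableSet_Ioo.prod MeasurableSet.univ), prod_inter_prod,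
          Ioi_inter_Ioo, max_self, inter_univ]

lemma pow_mul_conj_pow_polarCoord_symm (p : ℝ × ℝ) (n m : ℕ) :
    Complex.polarCoord.symm p ^ n * conj (Complex.polarCoord.symm p) ^ m
      = (p.1 : ℂ) ^ (n + m) * cexp (((n - m : ℤ) : ℂ) * p.2 * Complex.I) := by
  have hpolar : Complex.polarCoord.symm p = p.1 * cexp (p.2 * Complex.I) := by
    rw [Complex.polarCoord_symm_apply, Complex.exp_mul_I]
    push_cast
    ring
  calc _ = (p.1 : ℂ) ^ (n + m)
        * (cexp (n * (p.2 * Complex.I)) * cexp (m * conj (p.2 * Complex.I))) := by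
        rw [hpolar, map_mul, Complex.conj_ofReal, ← Complex.exp_conj, mul_pow, mul_pow,
          ← Complex.exp_nat_mul, ← Complex.exp_nat_mul]
        ring
    _ = _ := by
        rw [← Complex.exp_add, map_mul, Complex.conj_ofReal, Complex.conj_I]
        push_cast
        ring_nf

lemma integral_Ioo_ofReal_pow {R : ℝ} (hR : 0 ≤ R) (k : ℕ) :
    ∫ r in Ioo 0 R, (r : ℂ) ^ k = ((R ^ (k + 1) / (k + 1) : ℝ) : ℂ) := by
  simp_rw [← Complex.ofReal_pow]
  rw [integral_complex_ofReal, ← integral_Ioc_eq_integral_Ioo, ← intervalIntegral.integral_of_le hR,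
    integral_pow]
  simp

lemma integral_Ioo_exp_int_mul_I (k : ℤ) :
    ∫ θ in Ioo (-π) π, cexp (k * θ * Complex.I) = if k = 0 then ((2 * π : ℝ) : ℂ) else 0 := by
  rw [← integral_Ioc_eq_integral_Ioo, ← intervalIntegral.integral_of_le (by linarith [pi_pos])]
  split_ifs with hk
  · subst hk
    simp only [Int.cast_zero, zero_mul, Complex.exp_zero, intervalIntegral.integral_const,
      Complex.real_smul, mul_one]
    push_cast
    ring
  · have hc : (k : ℂ) * Complex.I ≠ 0 := by simpa using hk
    simp_rw [show ∀ θ : ℝ, (k : ℂ) * θ * Complex.I = k * Complex.I * θ from fun θ ↦ by ring]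
    rw [integral_exp_mul_complex hc, div_eq_zero_iff, sub_eq_zero]
    left
    calc cexp (k * Complex.I * π)
        = cexp (k * Complex.I * (-π : ℝ) + k * (2 * π * Complex.I)) := by push_cast; ring_nf
      _ = _ := by rw [Complex.exp_add, Complex.exp_int_mul_two_pi_mul_I, mul_one]

theorem integral_ball_pow_mul_conj_pow {R : ℝ} (hR : 0 ≤ R) (n m : ℕ) :
    ∫ z in Metric.ball (0 : ℂ) R, z ^ n * conj z ^ m
      = if n = m then ((2 * π * R ^ (n + m + 2) / (n + m + 2) : ℝ) : ℂ) else 0 := by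
  have hpolar (p : ℝ × ℝ) : p.1 • (Complex.polarCoord.symm p ^ n
      * conj (Complex.polarCoord.symm p) ^ m)
        = (p.1 : ℂ) ^ (n + m + 1) * cexp (((n - m : ℤ) : ℂ) * p.2 * Complex.I) := by
    rw [Complex.real_smul, pow_mul_conj_pow_polarCoord_symm]
    ring
  rw [setIntegral_ball_zero_eq_integral_polarCoord]
  simp_rw [hpolar]
  rw [Measure.volume_eq_prod, setIntegral_prod_mul (fun r : ℝ ↦ (r : ℂ) ^ (n + m + 1))
    (fun θ : ℝ ↦ cexp (((n - m : ℤ) : ℂ) * θ * Complex.I)), integral_Ioo_ofReal_pow hR,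
    integral_Ioo_exp_int_mul_I]
  simp only [sub_eq_zero, Nat.cast_inj]
  split_ifs
  · push_cast
    ring
  · rw [mul_zero]

lemma integral_ball_pow_mul_conj_pow_comm {R : ℝ} (hR : 0 ≤ R) (n m : ℕ) :
    ∫ z in Metric.ball (0 : ℂ) R, z ^ m * conj z ^ n
      = ∫ z in Metric.ball (0 : ℂ) R, z ^ n * conj z ^ m := by
  by_cases h : n = m
  · rw [h]
  · rw [integral_ball_pow_mul_conj_pow hR, integral_ball_pow_mul_conj_pow hR, if_neg h,
      if_neg (Ne.symm h)]

lemma integrableOn_ball_pow_mul_conj_pow (R : ℝ) (n m : ℕ) :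
    IntegrableOn (fun z : ℂ ↦ z ^ n * conj z ^ m) (Metric.ball 0 R) :=
  ((by fun_prop : Continuous fun z : ℂ ↦ z ^ n * conj z ^ m).continuousOn.integrableOn_compact
    (isCompact_closedBall 0 R)).mono_set Metric.ball_subset_closedBall

end DiskIntegrals

namespace Bicomplex

variable {R : ℝ}

lemma integral_ball_binner_hat_pow_jay_mul (hR : 0 ≤ R) (n m : ℕ) :
    ∫ z in Metric.ball (0 : ℂ) R, binner (hat z ^ n) (jay * hat z ^ m) = 0 := by
  simp_rw [binner_hat_pow_jay_mul]
  rw [integral_div, integral_const_mul,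
    integral_sub (integrableOn_ball_pow_mul_conj_pow R m n)
      (integrableOn_ball_pow_mul_conj_pow R n m),
    integral_ball_pow_mul_conj_pow_comm hR, sub_self, mul_zero, zero_div]

lemma integral_ball_binner_mul_hat_pow (hR : 0 ≤ R) {Λ : Bicomplex} (hplus : ‖plus Λ‖ = 1)
    (hminus : ‖minus Λ‖ = 1) (n m : ℕ) :
    ∫ z in Metric.ball (0 : ℂ) R, binner (Λ * hat z ^ n) (Λ * hat z ^ m)
      = if n = m then ((2 * π * R ^ (n + m + 2) / (n + m + 2) : ℝ) : ℂ) else 0 := by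
  simp_rw [binner_mul_mul hplus hminus, binner_hat_pow]
  rw [integral_div,
    integral_add (integrableOn_ball_pow_mul_conj_pow R m n)
      (integrableOn_ball_pow_mul_conj_pow R n m),
    integral_ball_pow_mul_conj_pow_comm hR, add_self_div_two, integral_ball_pow_mul_conj_pow hR]

lemma integral_ball_bnorm_mul_hat_pow_sq (hR : 0 ≤ R) {Λ : Bicomplex} (hplus : ‖plus Λ‖ = 1)
    (hminus : ‖minus Λ‖ = 1) (n : ℕ) :
    ∫ z in Metric.ball (0 : ℂ) R, bnorm (Λ * hat z ^ n) ^ 2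
      = 2 * π * R ^ (n + n + 2) / (n + n + 2) := by
  apply Complex.ofReal_injective
  rw [← integral_complex_ofReal]
  simp_rw [ofReal_bnorm_sq]
  simpa using integral_ball_binner_mul_hat_pow hR hplus hminus n n

end Bicomplex

open MeasureTheory in
/-- on the disk `B_R(0) ⊂ ℂ`, the functions `ẑⁿ, jẑⁿ` form an orthogonal
family in `L₂(B_R(0); 𝔹)`, with the stated inner products and norms. -/
theorem bicomplex_powers_orthogonal (R : ℝ) (hR : 0 < R) :
    (∀ n m : ℕ,
      ∫ z in Metric.ball (0 : ℂ) R,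
        Bicomplex.binner ((Bicomplex.hat z) ^ n) (Bicomplex.jay * (Bicomplex.hat z) ^ m)
        = 0) ∧
    (∀ n m : ℕ, ∀ Λ : Bicomplex, Λ = 1 ∨ Λ = Bicomplex.jay →
      ∫ z in Metric.ball (0 : ℂ) R,
        Bicomplex.binner (Λ * (Bicomplex.hat z) ^ n) (Λ * (Bicomplex.hat z) ^ m)
        = if n = m then
            ((2 * Real.pi * R ^ (n + m + 2) / (n + m + 2) : ℝ) : ℂ)
          else 0) ∧
    (∀ n : ℕ, ∀ Λ : Bicomplex, Λ = 1 ∨ Λ = Bicomplex.jay →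
      Real.sqrt (∫ z in Metric.ball (0 : ℂ) R,
          (Bicomplex.bnorm (Λ * (Bicomplex.hat z) ^ n)) ^ 2)
        = Real.sqrt (Real.pi / (n + 1)) * R ^ (n + 1)) := by
  refine ⟨Bicomplex.integral_ball_binner_hat_pow_jay_mul hR.le, fun n m Λ hΛ ↦ ?_,
    fun n Λ hΛ ↦ ?_⟩
  all_goals obtain ⟨hplus, hminus⟩ := Bicomplex.norm_plus_eq_one_and_norm_minus_eq_one hΛ
  · exact Bicomplex.integral_ball_binner_mul_hat_pow hR.le hplus hminus n m
  · have hsplit : 2 * π * R ^ (n + n + 2) / (n + n + 2) = π / (n + 1) * (R ^ (n + 1)) ^ 2 := by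
      field_simp
      ring
    rw [Bicomplex.integral_ball_bnorm_mul_hat_pow_sq hR.le hplus hminus, hsplit,
      sqrt_mul (by positivity), sqrt_sq (by positivity)]
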